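/- arXiv:1805.11811 — 2 statements merged into one kernel-verified Lean document; each statement's English description precedes it below -/
import Mathlib

section
/- Let $h : [n] \times \mathbb{R}^d \to \mathbb{R}^m$ (viewed as a function of an index $\xi_i$ and a random vector $u$), and suppose $\frac{1}{n}\sum_{i=1}^n \mathbb{E}_u[h(\xi_i, u)] = 0$. Let $\mathcal{B}$ be a uniformly random subset of $[n]$ of size $B$, and let $u_1, \dots, u_D$ be i.i.d. copies of $u$ independent of $\mathcal{B}$. Then $\mathbb{E} \left\| \frac{1}{BD} \sum_{b \in \mathcal{B}} \sum_{j=1}^D h(\xi_b, u_j) \right\|^2 \leq \left( \frac{1}{D} + \frac{\mathbb{1}[B<n]}{B} \right) \frac{1}{n} \sum_{i=1}^n \mathbb{E}_u \| h(\xi_i, u) \|^2$. -/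
/-!
Given the batch `S`, the samples `u j` are i.i.d., so with `Z_S = ∑_{b ∈ S} h b` the second moment
of `∑ⱼ Z_S (u j)` is `D 𝔼‖Z_S‖² + D (D - 1) ‖𝔼 Z_S‖²`. Cauchy–Schwarz gives
`‖Z_S‖² ≤ B ∑_{b ∈ S} ‖h b‖²`, and since every index lies in a fraction `B / n` of the batches,
the first term averages to at most `(1 / D) (1 / n) ∑ᵢ 𝔼‖h i‖²` after normalisation. For the
second term the means `g b = 𝔼 h b` sum to zero, so averaging `‖∑_{b ∈ S} g b‖²` over `S` leaves
the cross terms as a nonpositive multiple of `∑ ‖g b‖²`, and Jensen's `‖g b‖² ≤ 𝔼‖h b‖²` gives the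
`1 / B` term. When `B = n` the only batch is everything and `∑_{b ∈ S} g b = 0`.
-/

open Finset MeasureTheory ProbabilityTheory RealInnerProductSpace

section DoubleCounting

variable {α : Type*} [Fintype α] [DecidableEq α]

theorem sum_sum_eq_sum_card_filter_nsmul {ι M : Type*} [AddCommMonoid M] (𝒜 : Finset ι)
    (f : ι → Finset α) (φ : α → M) :
    ∑ S ∈ 𝒜, ∑ x ∈ f S, φ x = ∑ x, #{S ∈ 𝒜 | x ∈ f S} • φ x := by
  simp_rw [← sum_const, sum_filter]
  rw [sum_comm]
  simp [sum_ite_mem]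

theorem card_filter_powersetCard_univ_superset (k : ℕ) (t : Finset α) :
    #{S ∈ powersetCard k (univ : Finset α) | t ⊆ S} =
      if #t ≤ k then (Fintype.card α - #t).choose (k - #t) else 0 := by
  split_ifs with htk
  · simpa using card_filter_powersetCard_subset t univ k (subset_univ t) htk
  · rw [card_eq_zero, filter_eq_empty_iff]
    intro S hS htS
    exact htk ((card_le_card htS).trans (mem_powersetCard_univ.1 hS).le)

theorem sum_powersetCard_univ_sum {M : Type*} [AddCommMonoid M] {k : ℕ} (hk : 1 ≤ k)
    (φ : α → M) :
    ∑ S ∈ powersetCard k (univ : Finset α), ∑ b ∈ S, φ b =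
      (Fintype.card α - 1).choose (k - 1) • ∑ b, φ b := by
  refine (sum_sum_eq_sum_card_filter_nsmul _ id φ).trans ?_
  rw [smul_sum]
  refine sum_congr rfl fun b _ => ?_
  have := card_filter_powersetCard_univ_superset k {b}
  simp_all

/-- A pair `b ≠ b'` lies in `c 2` of the `k`-subsets whatever the pair, so the cross terms add up
to `c 2 * (‖∑ b, g b‖ ^ 2 - ∑ b, ‖g b‖ ^ 2) ≤ 0`. -/
theorem sum_powersetCard_univ_norm_sq_sum_le {E : Type*} [NormedAddCommGroup E]
    [InnerProductSpace ℝ E] {k : ℕ} (hk : 1 ≤ k) {g : α → E} (hg : ∑ b, g b = 0) :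
    ∑ S ∈ powersetCard k (univ : Finset α), ‖∑ b ∈ S, g b‖ ^ 2 ≤
      (Fintype.card α - 1).choose (k - 1) * ∑ b, ‖g b‖ ^ 2 := by
  set c : ℕ → ℝ := fun j => if j ≤ k then ((Fintype.card α - j).choose (k - j) : ℕ) else 0
  have hcount : ∀ b b' : α, (#{S ∈ powersetCard k univ | (b, b') ∈ S ×ˢ S} : ℝ) =
      c 2 + if b = b' then c 1 - c 2 else 0 := by
    intro b b'
    have h := card_filter_powersetCard_univ_superset k {b, b'}
    simp only [insert_subset_iff, singleton_subset_iff] at h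
    simp only [mem_product, h, c]
    split_ifs <;> simp_all
  have hexpand : ∀ S : Finset α, ‖∑ b ∈ S, g b‖ ^ 2 = ∑ p ∈ S ×ˢ S, ⟪g p.1, g p.2⟫ := by
    intro S
    rw [← real_inner_self_eq_norm_sq, sum_inner, sum_product]
    simp_rw [inner_sum]
  simp_rw [hexpand]
  rw [sum_sum_eq_sum_card_filter_nsmul, Fintype.sum_prod_type]
  simp_rw [nsmul_eq_mul, hcount, add_mul, sum_add_distrib, ite_mul, zero_mul, sum_ite_eq,
    mem_univ, if_true, ← mul_sum, ← inner_sum, ← sum_inner, hg, inner_zero_left, mul_zero,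
    zero_add, real_inner_self_eq_norm_sq]
  have hc1 : c 1 = (Fintype.card α - 1).choose (k - 1) := if_pos hk
  have hc2 : 0 ≤ c 2 := by positivity
  rw [hc1]
  exact mul_le_mul_of_nonneg_right (by linarith) (sum_nonneg fun b _ => sq_nonneg _)

end DoubleCounting

theorem sum_sum_ite_eq_card {ι R : Type*} [Fintype ι] [DecidableEq ι] [CommRing R] (a b : R) :
    ∑ j : ι, ∑ k : ι, (if j = k then a else b) =
      Fintype.card ι * a + ((Fintype.card ι : R) ^ 2 - Fintype.card ι) * b := by
  have h : ∀ j k : ι, (if j = k then a else b) = b + if j = k then a - b else 0 := by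
    intro j k; split_ifs <;> ring
  simp only [h, sum_add_distrib, sum_ite_eq, mem_univ, if_true, sum_const, card_univ, nsmul_eq_mul]
  ring

theorem cast_choose_sub_one_sub_one {K : Type*} [Field K] [CharZero K] {n k : ℕ} (hk : 1 ≤ k)
    (hkn : k ≤ n) :
    ((n - 1).choose (k - 1) : K) = k * n.choose k / n := by
  obtain ⟨n', rfl⟩ := Nat.exists_eq_add_of_le' (hk.trans hkn)
  obtain ⟨k', rfl⟩ := Nat.exists_eq_add_of_le' hk
  rw [eq_div_iff (Nat.cast_ne_zero.2 n'.succ_ne_zero), add_tsub_cancel_right, add_tsub_cancel_right]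
  norm_cast
  rw [mul_comm, Nat.add_one_mul_choose_eq, mul_comm]

theorem norm_sum_sq_le_card_mul_sum_norm_sq {ι E : Type*} [SeminormedAddCommGroup E]
    (S : Finset ι) (v : ι → E) :
    ‖∑ b ∈ S, v b‖ ^ 2 ≤ #S * ∑ b ∈ S, ‖v b‖ ^ 2 :=
  (pow_le_pow_left₀ (norm_nonneg _) (norm_sum_le S v) 2).trans sq_sum_le_card_mul_sum_sq

section ProductMeasure

variable {ι Ω E : Type*} [Fintype ι] [MeasurableSpace Ω] {ν : Measure Ω} [IsProbabilityMeasure ν]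
  [NormedAddCommGroup E]

theorem memLp_comp_eval_pi {Z : Ω → E} (hZ : MemLp Z 2 ν) (j : ι) :
    MemLp (fun u : ι → Ω => Z (u j)) 2 (Measure.pi fun _ => ν) :=
  hZ.comp_measurePreserving (measurePreserving_eval _ j)

theorem integral_comp_eval_pi [NormedSpace ℝ E] {f : Ω → E} (hf : AEStronglyMeasurable f ν)
    (j : ι) :
    ∫ u : ι → Ω, f (u j) ∂(Measure.pi fun _ => ν) = ∫ ω, f ω ∂ν := by
  have hmap := (measurePreserving_eval (fun _ => ν) j).map_eq
  rw [← hmap] at hf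
  exact (integral_map (measurable_pi_apply j).aemeasurable hf).symm.trans (by rw [hmap])

theorem sq_norm_integral_le_integral_sq_norm [NormedSpace ℝ E] [CompleteSpace E] {Z : Ω → E}
    (hZ : MemLp Z 2 ν) :
    ‖∫ ω, Z ω ∂ν‖ ^ 2 ≤ ∫ ω, ‖Z ω‖ ^ 2 ∂ν :=
  (convexOn_univ_norm.pow (fun x _ => norm_nonneg x) 2).map_integral_le (by fun_prop)
    isClosed_univ (by simp) (hZ.integrable one_le_two) (hZ.integrable_norm_pow two_ne_zero)

variable [InnerProductSpace ℝ E] [CompleteSpace E]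

theorem integral_inner_comp_eval_pi {Z : Ω → E} (hZ : Integrable Z ν) {j k : ι} (hjk : j ≠ k) :
    ∫ u : ι → Ω, ⟪Z (u j), Z (u k)⟫ ∂(Measure.pi fun _ => ν) = ⟪∫ ω, Z ω ∂ν, ∫ ω, Z ω ∂ν⟫ := by
  have hind : IndepFun (fun u : ι → Ω => u j) (fun u => u k) (Measure.pi fun _ => ν) :=
    (iIndepFun_pi (X := fun _ => id) fun _ => aemeasurable_id).indepFun hjk
  have hZ' : ∀ i : ι, Integrable Z ((Measure.pi fun _ : ι => ν).map fun u => u i) := fun i => by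
    rwa [(measurePreserving_eval (fun _ => ν) i).map_eq]
  have := hind.integral_bilin_comp_comp (measurable_pi_apply j).aemeasurable
    (measurable_pi_apply k).aemeasurable (hZ' j) (hZ' k) (innerSL ℝ)
  rwa [integral_comp_eval_pi hZ.1, integral_comp_eval_pi hZ.1] at this

theorem integral_norm_sq_sum_pi {Z : Ω → E} (hZ : MemLp Z 2 ν) :
    ∫ u : ι → Ω, ‖∑ j, Z (u j)‖ ^ 2 ∂(Measure.pi fun _ => ν) =
      Fintype.card ι * ∫ ω, ‖Z ω‖ ^ 2 ∂ν
        + ((Fintype.card ι : ℝ) ^ 2 - Fintype.card ι) * ‖∫ ω, Z ω ∂ν‖ ^ 2 := by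
  classical
  have hint : ∀ j k : ι,
      Integrable (fun u : ι → Ω => ⟪Z (u j), Z (u k)⟫) (Measure.pi fun _ => ν) :=
    fun j k => memLp_one_iff_integrable.1 <|
      (innerSL ℝ).memLp_of_bilin 1 (memLp_comp_eval_pi hZ j) (memLp_comp_eval_pi hZ k)
  have hterm : ∀ j k : ι, ∫ u : ι → Ω, ⟪Z (u j), Z (u k)⟫ ∂(Measure.pi fun _ => ν) =
      if j = k then ∫ ω, ‖Z ω‖ ^ 2 ∂ν else ‖∫ ω, Z ω ∂ν‖ ^ 2 := by
    intro j k
    split_ifs with hjk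
    · subst hjk
      simp_rw [real_inner_self_eq_norm_sq]
      exact integral_comp_eval_pi (hZ.1.norm.pow 2) j
    · rw [integral_inner_comp_eval_pi (hZ.integrable one_le_two) hjk, real_inner_self_eq_norm_sq]
  have hexpand : ∀ u : ι → Ω, ‖∑ j, Z (u j)‖ ^ 2 = ∑ j, ∑ k, ⟪Z (u j), Z (u k)⟫ := fun u => by
    simp_rw [← real_inner_self_eq_norm_sq, sum_inner, inner_sum]
  simp_rw [hexpand]
  rw [integral_finsetSum _ fun j _ => integrable_finsetSum _ fun k _ => hint j k]
  simp_rw [integral_finsetSum _ fun k _ => hint _ k, hterm]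
  exact sum_sum_ite_eq_card (ι := ι) (R := ℝ) _ _

theorem integral_norm_sq_sum_sum_pi_le {κ : Type*} (S : Finset κ) {h : κ → Ω → E}
    (hL2 : ∀ b, MemLp (h b) 2 ν) :
    ∫ u : ι → Ω, ‖∑ b ∈ S, ∑ j, h b (u j)‖ ^ 2 ∂(Measure.pi fun _ => ν) ≤
      Fintype.card ι * (#S * ∑ b ∈ S, ∫ ω, ‖h b ω‖ ^ 2 ∂ν)
        + (Fintype.card ι : ℝ) ^ 2 * ‖∑ b ∈ S, ∫ ω, h b ω ∂ν‖ ^ 2 := by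
  have hZ : MemLp (fun ω => ∑ b ∈ S, h b ω) 2 ν := memLp_finsetSum S fun b _ => hL2 b
  have hsq : ∀ b, Integrable (fun ω => ‖h b ω‖ ^ 2) ν :=
    fun b => (hL2 b).integrable_norm_pow two_ne_zero
  simp_rw [sum_comm (s := S)]
  rw [integral_norm_sq_sum_pi hZ, ← integral_finsetSum _ fun b _ => (hL2 b).integrable one_le_two]
  gcongr
  · calc ∫ ω, ‖∑ b ∈ S, h b ω‖ ^ 2 ∂ν ≤ ∫ ω, #S * ∑ b ∈ S, ‖h b ω‖ ^ 2 ∂ν :=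
          integral_mono (hZ.integrable_norm_pow two_ne_zero)
            ((integrable_finsetSum S fun b _ => hsq b).const_mul _)
            fun ω => norm_sum_sq_le_card_mul_sum_norm_sq S _
      _ = #S * ∑ b ∈ S, ∫ ω, ‖h b ω‖ ^ 2 ∂ν := by
          rw [integral_const_mul, integral_finsetSum S fun b _ => hsq b]
  · linarith [Nat.cast_nonneg (α := ℝ) (Fintype.card ι)]

end ProductMeasure

section Batches

variable {α Ω E : Type*} [Fintype α] [DecidableEq α] [MeasurableSpace Ω] {ν : Measure Ω}
  [IsProbabilityMeasure ν] [NormedAddCommGroup E] [InnerProductSpace ℝ E] [CompleteSpace E]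
  {h : α → Ω → E} {k : ℕ}

theorem sum_powersetCard_univ_norm_sq_sum_integral_le (hk : 1 ≤ k) (hkα : k ≤ Fintype.card α)
    (hL2 : ∀ b, MemLp (h b) 2 ν) (hsum : ∑ b, ∫ ω, h b ω ∂ν = 0) :
    ∑ S ∈ powersetCard k (univ : Finset α), ‖∑ b ∈ S, ∫ ω, h b ω ∂ν‖ ^ 2 ≤
      (if k < Fintype.card α then 1 else 0) * (Fintype.card α - 1).choose (k - 1) *
        ∑ b, ∫ ω, ‖h b ω‖ ^ 2 ∂ν := by
  split_ifs with hlt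
  · rw [one_mul]
    refine (sum_powersetCard_univ_norm_sq_sum_le hk hsum).trans ?_
    gcongr with b
    exact sq_norm_integral_le_integral_sq_norm (hL2 b)
  · have hall : powersetCard k (univ : Finset α) = {univ} := by
      simpa [show k = Fintype.card α by omega] using powersetCard_self (univ : Finset α)
    simp [hall, hsum]

theorem sum_powersetCard_univ_integral_norm_sq_sum_sum_pi_le {ι : Type*} [Fintype ι]
    (hk : 1 ≤ k) (hkα : k ≤ Fintype.card α) (hL2 : ∀ b, MemLp (h b) 2 ν)
    (hsum : ∑ b, ∫ ω, h b ω ∂ν = 0) :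
    ∑ S ∈ powersetCard k (univ : Finset α),
        ∫ u : ι → Ω, ‖∑ b ∈ S, ∑ j, h b (u j)‖ ^ 2 ∂(Measure.pi fun _ => ν) ≤
      (Fintype.card ι * k + Fintype.card ι ^ 2 * (if k < Fintype.card α then 1 else 0)) *
        ((Fintype.card α - 1).choose (k - 1) * ∑ b, ∫ ω, ‖h b ω‖ ^ 2 ∂ν) := by
  calc _ ≤ ∑ S ∈ powersetCard k (univ : Finset α),
        (Fintype.card ι * (k * ∑ b ∈ S, ∫ ω, ‖h b ω‖ ^ 2 ∂ν)
          + (Fintype.card ι : ℝ) ^ 2 * ‖∑ b ∈ S, ∫ ω, h b ω ∂ν‖ ^ 2) :=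
        sum_le_sum fun S hS => by
          simpa [mem_powersetCard_univ.1 hS] using integral_norm_sq_sum_sum_pi_le (ι := ι) S hL2
    _ ≤ _ := by
        rw [sum_add_distrib, ← mul_sum, ← mul_sum, ← mul_sum, sum_powersetCard_univ_sum hk,
          nsmul_eq_mul]
        grw [sum_powersetCard_univ_norm_sq_sum_integral_le hk hkα hL2 hsum]
        exact le_of_eq (by ring)

end Batches

/-- Variance bound for the double average over a uniform random `B`-subset `𝒮` of `[n]`
and `D` i.i.d. samples `u 1, …, u D ∼ ν`, under the centering condition
`(1/n) ∑ᵢ 𝔼ᵤ[h ξᵢ u] = 0`. -/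
theorem stmt_5 (n m B D : ℕ) (hB1 : 1 ≤ B) (hBn : B ≤ n) (hD : 1 ≤ D)
    {Ω : Type} [MeasurableSpace Ω] (ν : Measure Ω) [IsProbabilityMeasure ν]
    (h : Fin n → Ω → EuclideanSpace ℝ (Fin m))
    (hL2 : ∀ i, MemLp (h i) 2 ν)
    (hcenter : (1 / (n : ℝ)) • ∑ i, ∫ ω, h i ω ∂ν = 0) :
    (1 / (n.choose B : ℝ)) *
        ∑ S ∈ Finset.powersetCard B (Finset.univ : Finset (Fin n)),
          ∫ u : Fin D → Ω,
            ‖(1 / ((B : ℝ) * (D : ℝ))) • ∑ b ∈ S, ∑ j : Fin D, h b (u j)‖ ^ 2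
            ∂(Measure.pi fun _ : Fin D => ν)
      ≤ (1 / (D : ℝ) + (if B < n then (1 : ℝ) else 0) / (B : ℝ)) *
          ((1 / (n : ℝ)) * ∑ i, ∫ ω, ‖h i ω‖ ^ 2 ∂ν) := by
  have hn : (0 : ℝ) < n := by exact_mod_cast hB1.trans hBn
  have hD' : (D : ℝ) ≠ 0 := Nat.cast_ne_zero.2 (by omega)
  have hsum : ∑ i, ∫ ω, h i ω ∂ν = 0 :=
    (smul_eq_zero.1 hcenter).resolve_left (one_div_pos.2 hn).ne'
  have hbatches := sum_powersetCard_univ_integral_norm_sq_sum_sum_pi_le (ι := Fin D) hB1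
    (by simpa using hBn) hL2 hsum
  simp only [Fintype.card_fin, cast_choose_sub_one_sub_one hB1 hBn] at hbatches
  have hchoose_pos : (0 : ℝ) < n.choose B := by exact_mod_cast Nat.choose_pos hBn
  simp_rw [norm_smul, mul_pow, Real.norm_eq_abs, sq_abs, integral_const_mul, ← mul_sum]
  grw [hbatches]
  refine le_of_eq ?_
  field_simp
end

section
/- Let $F : \mathbb{R}^d \to \mathbb{R}$ be differentiable with $L_1$-Lipschitz gradient, let $\mu > 0$, and define $G_\mu(x, u) = \frac{F(x + \mu u) - F(x)}{\mu} u$. Then for any two points $x, y \in \mathbb{R}^d$ and any $u \in \mathbb{R}^d$, $\|G_\mu(x, u) - G_\mu(y, u)\|^2 \leq \frac{3}{2} L_1^2 \mu^2 \|u\|^6 + 3 \langle \nabla F(x) - \nabla F(y), u \rangle^2 \|u\|^2$. -/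
/-! Each difference quotient `(F (x + μ • u) - F x) / μ` lies within `L₁ μ ‖u‖² / 2` of the
directional derivative `⟪∇F x, u⟫` (the descent lemma for an `L₁`-smooth function). Subtracting
the two estimates and using `(r - s + t)² ≤ 3 (r² + s² + t²)` gives the bound, since the common
factor `u` contributes `‖u‖²`. -/

open RealInnerProductSpace Set

section LipschitzGradient

variable {E : Type*} [NormedAddCommGroup E] [InnerProductSpace ℝ E] [CompleteSpace E]
  {F : E → ℝ} {g : E → E} {L : ℝ}

theorem abs_sub_sub_inner_le_of_lipschitz_gradient (hgrad : ∀ x, HasGradientAt F (g x) x)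
    (hlip : ∀ a b, ‖g a - g b‖ ≤ L * ‖a - b‖) (a h : E) :
    |F (a + h) - F a - ⟪g a, h⟫| ≤ L / 2 * ‖h‖ ^ 2 := by
  -- Fence `t ↦ F (a + t • h) - F a - t ⟪g a, h⟫` by `t ↦ L t² ‖h‖² / 2` on `[0, 1]`.
  set φ : ℝ → ℝ := fun t => F (a + t • h) - F a - t * ⟪g a, h⟫
  have hφ : ∀ t, HasDerivAt φ ⟪g (a + t • h) - g a, h⟫ t := by
    intro t
    have hline : HasDerivAt (fun t : ℝ => a + t • h) h t := by
      simpa using ((hasDerivAt_id t).smul_const h).const_add a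
    have := (((hgrad (a + t • h)).hasFDerivAt.comp_hasDerivAt t hline).sub_const (F a)).sub
      ((hasDerivAt_id t).mul_const ⟪g a, h⟫)
    rw [inner_sub_left]
    simp only [InnerProductSpace.toDual_apply_apply, Function.comp_def, one_mul] at this
    exact this
  have hB : ∀ t, HasDerivAt (fun t : ℝ => L / 2 * ‖h‖ ^ 2 * t ^ 2) (L * ‖h‖ ^ 2 * t) t := by
    intro t
    refine ((hasDerivAt_pow 2 t).const_mul (L / 2 * ‖h‖ ^ 2)).congr_deriv ?_
    push_cast
    ring
  have hbound : ∀ t ∈ Ico (0 : ℝ) 1, ‖⟪g (a + t • h) - g a, h⟫‖ ≤ L * ‖h‖ ^ 2 * t := by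
    rintro t ⟨ht, -⟩
    calc ‖⟪g (a + t • h) - g a, h⟫‖ ≤ ‖g (a + t • h) - g a‖ * ‖h‖ := norm_inner_le_norm _ _
      _ ≤ L * ‖t • h‖ * ‖h‖ := by
          gcongr
          simpa using hlip (a + t • h) a
      _ = L * ‖h‖ ^ 2 * t := by rw [norm_smul, Real.norm_of_nonneg ht]; ring
  have := image_norm_le_of_norm_deriv_right_le_deriv_boundary
    (fun t _ => (hφ t).continuousAt.continuousWithinAt) (fun t _ => (hφ t).hasDerivWithinAt)
    (by simp [φ]) hB hbound (right_mem_Icc.2 zero_le_one)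
  simpa [φ] using this

theorem abs_slope_sub_inner_le_of_lipschitz_gradient (hgrad : ∀ x, HasGradientAt F (g x) x)
    (hlip : ∀ a b, ‖g a - g b‖ ≤ L * ‖a - b‖) {μ : ℝ} (hμ : 0 < μ) (x u : E) :
    |(F (x + μ • u) - F x) / μ - ⟪g x, u⟫| ≤ L / 2 * μ * ‖u‖ ^ 2 := by
  have key := abs_sub_sub_inner_le_of_lipschitz_gradient hgrad hlip x (μ • u)
  rw [real_inner_smul_right, norm_smul, Real.norm_of_nonneg hμ.le] at key
  have hslope : (F (x + μ • u) - F x) / μ - ⟪g x, u⟫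
      = (F (x + μ • u) - F x - μ * ⟪g x, u⟫) / μ := by
    field_simp
  rw [hslope, abs_div, abs_of_pos hμ, div_le_iff₀ hμ]
  linarith

end LipschitzGradient

theorem sq_sub_le_of_abs_sub_le {p q a b ε : ℝ} (hp : |p - a| ≤ ε) (hq : |q - b| ≤ ε) :
    (p - q) ^ 2 ≤ 6 * ε ^ 2 + 3 * (a - b) ^ 2 := by
  have hp2 : (p - a) ^ 2 ≤ ε ^ 2 := sq_le_sq' (abs_le.mp hp).1 (abs_le.mp hp).2
  have hq2 : (q - b) ^ 2 ≤ ε ^ 2 := sq_le_sq' (abs_le.mp hq).1 (abs_le.mp hq).2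
  linarith [sq_nonneg (p - a + (q - b)), sq_nonneg (p - a - (a - b)),
    sq_nonneg (q - b + (a - b))]

/-- Pointwise bound for the difference of finite-difference gradient estimators
`G_μ(x, u) = μ⁻¹ (F(x + μu) - F(x)) u` for an `L₁`-smooth `F`. -/
theorem stmt_10 (d : ℕ) (L1 μ : ℝ) (hμ : 0 < μ)
    (F : EuclideanSpace ℝ (Fin d) → ℝ)
    (g : EuclideanSpace ℝ (Fin d) → EuclideanSpace ℝ (Fin d))
    (hgrad : ∀ x, HasGradientAt F (g x) x)
    (hlip : ∀ a b, ‖g a - g b‖ ≤ L1 * ‖a - b‖)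
    (x y u : EuclideanSpace ℝ (Fin d)) :
    ‖((F (x + μ • u) - F x) / μ) • u - ((F (y + μ • u) - F y) / μ) • u‖ ^ 2
      ≤ 3 / 2 * L1 ^ 2 * μ ^ 2 * ‖u‖ ^ 6 + 3 * (⟪g x - g y, u⟫ : ℝ) ^ 2 * ‖u‖ ^ 2 := by
  have hslopes := sq_sub_le_of_abs_sub_le
    (abs_slope_sub_inner_le_of_lipschitz_gradient hgrad hlip hμ x u)
    (abs_slope_sub_inner_le_of_lipschitz_gradient hgrad hlip hμ y u)
  rw [← inner_sub_left] at hslopes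
  rw [← sub_smul, norm_smul, Real.norm_eq_abs, mul_pow, sq_abs]
  calc _ ≤ (6 * (L1 / 2 * μ * ‖u‖ ^ 2) ^ 2 + 3 * ⟪g x - g y, u⟫ ^ 2) * ‖u‖ ^ 2 := by
        gcongr
    _ = _ := by ring
end
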